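/- arXiv:1501.00508 — 3 statements merged into one kernel-verified Lean document; each statement's English description precedes it below -/
import Mathlib

section
/- Let C be a category, A a full reflective subcategory with reflector F and inclusion G, and let η denote the unit of the adjunction. Every object X of C lying in the double orthogonal class A^⊥⊥ admits a unique structure of algebra over the monad G∘F; moreover its structure map is the unique retraction of η_X : X → GFX. -/
open CategoryTheory

universe v u

/-- Morphisms orthogonal to a class of objects: `f : X ⟶ Y` such that precomposition with
`f` is bijective on maps into every object satisfying `P`. -/
def morOrth {C : Type u} [Category.{v} C] (P : C → Prop) : MorphismProperty C :=
  fun _ Y f => ∀ Z : C, P Z → Function.Bijective (fun g : Y ⟶ Z => f ≫ g)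

/-- Objects orthogonal to a class of morphisms. -/
def objOrth {C : Type u} [Category.{v} C] (S : MorphismProperty C) : C → Prop :=
  fun Z => ∀ ⦃X Y : C⦄ (f : X ⟶ Y), S f → Function.Bijective (fun g : Y ⟶ Z => f ≫ g)

/-- The unit of a reflection is orthogonal to the subcategory. -/
lemma unit_morOrth {C : Type u} [Category.{v} C] (P : C → Prop)
    (F : C ⥤ ObjectProperty.FullSubcategory P) (adj : F ⊣ ObjectProperty.ι P) (X : C) :
    morOrth P (adj.unit.app X) := by
  intro Z hZ
  exact (adj.homEquiv X ⟨Z, hZ⟩).bijective.comp ((ObjectProperty.fullyFaithfulι P).homEquiv (X := F.obj X) (Y := ⟨Z, hZ⟩)).symm.bijective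

/-- Let `A` be the full reflective subcategory of `C` of objects satisfying
`P`, with reflector `F` and inclusion `G`.  Every object `X` in `A^⊥⊥` admits a unique
structure of algebra over the monad `G ∘ F`, and its structure map is the unique
retraction of the unit `η_X : X ⟶ GFX`. -/
theorem stmt4 {C : Type u} [Category.{v} C] (P : C → Prop)
    (F : C ⥤ ObjectProperty.FullSubcategory P) (adj : F ⊣ ObjectProperty.ι P)
    (X : C) (hX : objOrth (morOrth P) X) :
    (∃! a : adj.toMonad.obj X ⟶ X,
      adj.toMonad.η.app X ≫ a = 𝟙 X ∧
        adj.toMonad.μ.app X ≫ a = adj.toMonad.map a ≫ a) ∧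
    ∀ a : adj.toMonad.obj X ⟶ X,
      (adj.toMonad.η.app X ≫ a = 𝟙 X ∧
        adj.toMonad.μ.app X ≫ a = adj.toMonad.map a ≫ a) →
      ∀ r : adj.toMonad.obj X ⟶ X, adj.toMonad.η.app X ≫ r = 𝟙 X → r = a := by
  set T := adj.toMonad
  have hη : ∀ (Y : C), Function.Bijective
      (fun g : T.obj Y ⟶ X => adj.unit.app Y ≫ g) :=
    fun Y => hX (adj.unit.app Y) (unit_morOrth P F adj Y)
  -- the retraction
  obtain ⟨r, hr⟩ := (hη X).2 (𝟙 X)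
  have hηapp : T.η.app X = adj.unit.app X := rfl
  have uniq_retr : ∀ r' : T.obj X ⟶ X, adj.unit.app X ≫ r' = 𝟙 X → r' = r := by
    intro r' hr'
    exact (hη X).1 (hr'.trans hr.symm)
  have hmul : T.μ.app X ≫ r = T.map r ≫ r := by
    apply (hη (T.obj X)).1
    show adj.unit.app (T.obj X) ≫ T.μ.app X ≫ r = adj.unit.app (T.obj X) ≫ T.map r ≫ r
    have h1 : adj.unit.app (T.obj X) ≫ T.μ.app X = 𝟙 (T.obj X) := T.left_unit X
    have h2 : adj.unit.app (T.obj X) ≫ T.map r = r ≫ adj.unit.app X :=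
      (adj.unit.naturality r).symm
    exact (Category.assoc _ _ _).symm.trans ((congrArg (· ≫ r) h1).trans ((Category.id_comp r).trans
      ((Category.comp_id r).symm.trans ((congrArg (r ≫ ·) hr.symm).trans ((Category.assoc _ _ _).symm.trans
        ((congrArg (· ≫ r) h2.symm).trans (Category.assoc _ _ _)))))))
  constructor
  · exact ⟨r, ⟨hr, hmul⟩, fun a ha => uniq_retr a ha.1⟩
  · intro a ha r' hr'
    rw [uniq_retr r' hr', uniq_retr a ha.1]
end

section
/- Let C be a category and A a full reflective subcategory, with inclusion G and reflector F. Then the following are equivalent: (1) A^⊥⊥ = A; (2) A is replete (closed under isomorphisms); and each of these holds if and only if the comparison functor from A to the Eilenberg–Moore category of the monad G∘F is an isomorphism (not just an equivalence) of categories onto its image described as the full subcategory of objects admitting a GF-algebra structure. -/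
open CategoryTheory

universe v u

/-- For a full reflective subcategory `A` (objects satisfying `P`, reflector
`F`, inclusion `G`), the following are equivalent: (1) `A^⊥⊥ = A`; (2) `A` is replete;
and each holds iff the objects of `C` admitting a `GF`-algebra structure (over the monad
of the adjunction) are exactly the objects of `A`, i.e. the comparison with the
Eilenberg–Moore category is an isomorphism onto that full subcategory. -/
theorem stmt7 {C : Type u} [Category.{v} C] (P : C → Prop)
    (F : C ⥤ ObjectProperty.FullSubcategory P) (adj : F ⊣ ObjectProperty.ι P) :
    ((objOrth (morOrth P) = P) ↔ (∀ ⦃X Y : C⦄, P X → (X ≅ Y) → P Y)) ∧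
    ((objOrth (morOrth P) = P) ↔
      ∀ X : C,
        (∃ a : adj.toMonad.obj X ⟶ X,
          adj.toMonad.η.app X ≫ a = 𝟙 X ∧
            adj.toMonad.μ.app X ≫ a = adj.toMonad.map a ≫ a) ↔ P X) := by
  -- every object of `A` is in the double orthogonal
  have hsub : ∀ X, P X → objOrth (morOrth P) X := fun X hX _ _ f hf => hf X hX
  -- `T X` lies in `A`
  have hPT : ∀ X : C, P (adj.toMonad.obj X) := fun X => (F.obj X).property
  -- the unit is orthogonal to `A`
  have hmor : ∀ X : C, morOrth P (adj.toMonad.η.app X) := by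
    intro X Z hZ
    have h : (fun g : adj.toMonad.obj X ⟶ Z => adj.toMonad.η.app X ≫ g)
        = fun g : adj.toMonad.obj X ⟶ Z =>
            (adj.homEquiv X ⟨Z, hZ⟩ : (F.obj X ⟶ ⟨Z, hZ⟩) ≃ (X ⟶ Z)) (ObjectProperty.homMk g) := by
      funext g
      exact (adj.homEquiv_unit X ⟨Z, hZ⟩ (ObjectProperty.homMk g)).symm
    rw [h]
    exact (adj.homEquiv X ⟨Z, hZ⟩).bijective.comp
      ⟨fun a b h => congrArg (fun k => k.hom) h, ObjectProperty.homMk_surjective⟩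
  -- surjectivity of precomposition with the unit into `X` makes the unit an iso
  have hiso : ∀ X : C,
      (Function.Surjective fun g : adj.toMonad.obj X ⟶ X => adj.toMonad.η.app X ≫ g) →
      IsIso (adj.toMonad.η.app X) := by
    intro X hs
    obtain ⟨r, hr⟩ := hs (𝟙 X)
    simp only [] at hr
    refine ⟨r, hr, ?_⟩
    apply (hmor X _ (hPT X)).injective
    show adj.toMonad.η.app X ≫ r ≫ adj.toMonad.η.app X = adj.toMonad.η.app X ≫ 𝟙 _
    rw [← Category.assoc, hr]
    simp
  -- the double orthogonal is closed under isomorphisms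
  have hclose : ∀ {X Y : C}, objOrth (morOrth P) X → (X ≅ Y) → objOrth (morOrth P) Y := by
    intro X Y hX e A B f hf
    constructor
    · intro g1 g2 h
      simp only [] at h
      have h' : f ≫ g1 ≫ e.inv = f ≫ g2 ≫ e.inv := by
        rw [← Category.assoc, ← Category.assoc, h]
      have := (hX f hf).injective h'
      simpa using (cancel_mono e.inv).mp this
    · intro h
      obtain ⟨g, hg⟩ := (hX f hf).surjective (h ≫ e.inv)
      simp only [] at hg
      refine ⟨g ≫ e.hom, ?_⟩
      show f ≫ g ≫ e.hom = h
      rw [← Category.assoc, hg, Category.assoc, e.inv_hom_id, Category.comp_id]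
  -- algebra structure from iso unit
  have halg : ∀ X : C, IsIso (adj.toMonad.η.app X) →
      ∃ a : adj.toMonad.obj X ⟶ X,
        adj.toMonad.η.app X ≫ a = 𝟙 X ∧
          adj.toMonad.μ.app X ≫ a = adj.toMonad.map a ≫ a := by
    intro X h
    refine ⟨inv (adj.toMonad.η.app X), IsIso.hom_inv_id _, ?_⟩
    rw [← cancel_epi (adj.toMonad.map (adj.toMonad.η.app X)), ← Category.assoc,
      adj.toMonad.right_unit, ← Category.assoc, ← Functor.map_comp]
    simp
  -- iso unit from algebra structure
  have halg' : ∀ X : C,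
      (∃ a : adj.toMonad.obj X ⟶ X,
        adj.toMonad.η.app X ≫ a = 𝟙 X ∧
          adj.toMonad.μ.app X ≫ a = adj.toMonad.map a ≫ a) →
      IsIso (adj.toMonad.η.app X) := by
    rintro X ⟨a, h1, -⟩
    refine ⟨a, h1, ?_⟩
    apply (hmor X _ (hPT X)).injective
    show adj.toMonad.η.app X ≫ a ≫ adj.toMonad.η.app X = adj.toMonad.η.app X ≫ 𝟙 _
    rw [← Category.assoc, h1]
    simp
  constructor
  · constructor
    · intro hEq X Y hX e
      rw [← hEq] at hX ⊢
      exact hclose hX e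
    · intro hrep
      funext X
      apply propext
      constructor
      · intro hX
        have hi := hiso X ((hX (adj.toMonad.η.app X) (hmor X)).surjective)
        exact hrep (hPT X) (asIso (adj.toMonad.η.app X)).symm
      · exact hsub X
  · constructor
    · intro hEq X
      constructor
      · intro ha
        have hi := halg' X ha
        have := hclose (hsub _ (hPT X)) (asIso (adj.toMonad.η.app X)).symm
        rw [hEq] at this
        exact this
      · intro hX
        exact halg X (hiso X ((hmor X X hX).surjective))
    · intro hAlg
      funext X
      apply propext
      constructor
      · intro hX
        have hi := hiso X ((hX (adj.toMonad.η.app X) (hmor X)).surjective)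
        exact (hAlg X).mp (halg X hi)
      · exact hsub X
end

section
/- Let C be a category with a replete full reflective subcategory A, reflector F. Define W to be the class of morphisms f with F f an isomorphism, and let Fib be the class of morphisms with the right lifting property with respect to W. Then every morphism of the form GF f : GFA → GFB (for f : A → B in C) belongs to Fib, i.e., every morphism of C lying in the subcategory A has the right lifting property with respect to all morphisms inverted by F. -/
open CategoryTheory

universe v u

/-- Let `A` be a replete full reflective subcategory of `C` (objects
satisfying `P`, reflector `F`, inclusion `G`), `W` the class of morphisms inverted by `F`.
Then for every morphism `f` of `C`, the morphism `GF f` (a morphism lying in the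
subcategory `A`) has the right lifting property with respect to every morphism in `W`. -/
theorem stmt11 {C : Type u} [Category.{v} C] (P : C → Prop)
    (hrep : ∀ ⦃X Y : C⦄, P X → (X ≅ Y) → P Y)
    (F : C ⥤ ObjectProperty.FullSubcategory P) (adj : F ⊣ ObjectProperty.ι P)
    {A B : C} (f : A ⟶ B)
    {V W' : C} (g : V ⟶ W') (hg : IsIso (F.map g)) :
    HasLiftingProperty g ((F ⋙ ObjectProperty.ι P).map f) := by
  constructor
  intro u v sq
  refine ⟨⟨⟨adj.homEquiv W' (F.obj A) (inv (F.map g) ≫ (adj.homEquiv V (F.obj A)).symm u), ?_, ?_⟩⟩⟩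
  · rw [← Adjunction.homEquiv_naturality_left, ← Category.assoc, IsIso.hom_inv_id,
      Category.id_comp, Equiv.apply_symm_apply]
  · have key : (adj.homEquiv V (F.obj A)).symm u ≫ F.map f
        = F.map g ≫ (adj.homEquiv W' (F.obj B)).symm v := by
      rw [← Adjunction.homEquiv_naturality_left_symm, ← sq.w,
        ← Adjunction.homEquiv_naturality_right_symm]
      rfl
    show adj.homEquiv W' (F.obj A) _ ≫ (ObjectProperty.ι P).map (F.map f) = v
    rw [← Adjunction.homEquiv_naturality_right, Category.assoc, key, ← Category.assoc,
      IsIso.inv_hom_id, Category.id_comp, Equiv.apply_symm_apply]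
end
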